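/- arXiv:2604.02582 — 7 statements merged into one kernel-verified Lean document; each statement's English description precedes it below -/
import Mathlib

section
/- Suppose C : Σ → Σ̂ᵏ is a code with relative distance at least 1 − δ, and let η > 2√δ. Then for every word w ∈ Σ̂ᵏ, there are at most 2/η symbols a ∈ Σ such that C(a) agrees with w on at least an η fraction of the k coordinates. -/
set_option maxHeartbeats 1000000 in
/-- If `C : S → Fin k → Sh` is a code of relative distance at least `1 - δ`
(any two distinct codewords differ in at least `(1-δ)k` coordinates) and
`η > 2√δ`, then for every word `w` at most `2/η` symbols `a` have codewords
agreeing with `w` on at least an `η` fraction of coordinates. -/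
theorem stmt1 {S Sh : Type*} [Fintype S] (k : ℕ) (hk : 0 < k)
    (δ η : ℝ) (hδ : 0 ≤ δ) (hη : 2 * Real.sqrt δ < η)
    (C : S → Fin k → Sh)
    (hcode : ∀ a b : S, a ≠ b →
      (1 - δ) * (k : ℝ) ≤ (Set.ncard {i : Fin k | C a i ≠ C b i} : ℝ))
    (w : Fin k → Sh) :
    (Set.ncard {a : S | η * (k : ℝ) ≤ (Set.ncard {i : Fin k | C a i = w i} : ℝ)} : ℝ)
      ≤ 2 / η := by
  classical
  have hη0 : 0 < η := lt_of_le_of_lt (by positivity) hη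
  have hδη : 4 * δ < η ^ 2 := by
    have h := Real.sq_sqrt hδ
    nlinarith [Real.sqrt_nonneg δ]
  set T : S → Finset (Fin k) := fun a => Finset.univ.filter (fun i => C a i = w i) with hT
  have hncard : ∀ a, (Set.ncard {i : Fin k | C a i = w i}) = (T a).card := by
    intro a
    rw [Set.ncard_eq_toFinset_card']
    congr 1
    ext i; simp [hT]
  set A : Finset S := Finset.univ.filter (fun a => η * (k : ℝ) ≤ ((T a).card : ℝ)) with hA
  have hAset : {a : S | η * (k : ℝ) ≤ (Set.ncard {i : Fin k | C a i = w i} : ℝ)}.ncard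
      = A.card := by
    rw [Set.ncard_eq_toFinset_card']
    congr 1
    ext a
    simp [hA, hncard]
  rw [hAset]
  set m := A.card with hm
  rcases Nat.eq_zero_or_pos m with hm0 | hm1
  · rw [hm0]
    norm_num
    positivity
  -- pairwise bound
  have hpair : ∀ a b : S, a ≠ b → ((T a ∩ T b).card : ℝ) ≤ δ * k := by
    intro a b hab
    set D : Finset (Fin k) := Finset.univ.filter (fun i => C a i ≠ C b i) with hD
    have hdisj : T a ∩ T b ⊆ Dᶜ := by
      intro i hi
      simp only [hT, Finset.mem_inter, Finset.mem_filter] at hi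
      simp only [hD, Finset.mem_compl, Finset.mem_filter, not_and, not_not]
      intro _
      rw [hi.1.2, hi.2.2]
    have hDk : D.card ≤ k := by
      simpa using Finset.card_filter_le Finset.univ (fun i => C a i ≠ C b i)
    have hcard : (T a ∩ T b).card ≤ k - D.card := by
      simpa [Finset.card_compl, Fintype.card_fin] using Finset.card_le_card hdisj
    have hdiff : (1 - δ) * (k : ℝ) ≤ (D.card : ℝ) := by
      have heq : (Set.ncard {i : Fin k | C a i ≠ C b i}) = D.card := by
        rw [Set.ncard_eq_toFinset_card']
        congr 1
        ext i; simp [hD]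
      have := hcode a b hab
      rwa [heq] at this
    have : ((T a ∩ T b).card : ℝ) ≤ (k : ℝ) - (D.card : ℝ) := by
      have := (Nat.cast_le (α := ℝ)).mpr hcard
      rwa [Nat.cast_sub hDk] at this
    linarith
  -- counting
  set d : Fin k → ℕ := fun i => (A.filter (fun a => C a i = w i)).card with hd
  have hsum : ∑ a ∈ A, (T a).card = ∑ i, d i := by
    simp only [hT, hd, Finset.card_filter]
    exact Finset.sum_comm
  have hinter : ∀ a b : S, (T a ∩ T b).card
      = ∑ i, (if C a i = w i then 1 else 0) * (if C b i = w i then 1 else 0) := by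
    intro a b
    have : T a ∩ T b = Finset.univ.filter (fun i => C a i = w i ∧ C b i = w i) := by
      simp [hT, Finset.filter_and]
    rw [this, Finset.card_filter]
    refine Finset.sum_congr rfl fun i _ => ?_
    by_cases h1 : C a i = w i <;> by_cases h2 : C b i = w i <;> simp [h1, h2]
  have hsq : ∑ a ∈ A, ∑ b ∈ A, (T a ∩ T b).card = ∑ i, (d i) ^ 2 := by
    simp only [hinter]
    calc ∑ a ∈ A, ∑ b ∈ A, ∑ i,
            (if C a i = w i then 1 else 0) * (if C b i = w i then 1 else 0)
        = ∑ a ∈ A, ∑ i, ∑ b ∈ A,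
            (if C a i = w i then 1 else 0) * (if C b i = w i then 1 else 0) :=
          Finset.sum_congr rfl fun a _ => Finset.sum_comm
      _ = ∑ i, ∑ a ∈ A, ∑ b ∈ A,
            (if C a i = w i then 1 else 0) * (if C b i = w i then 1 else 0) :=
          Finset.sum_comm
      _ = ∑ i, (d i) ^ 2 := by
          refine Finset.sum_congr rfl fun i _ => ?_
          rw [← Finset.sum_mul_sum, ← sq]
          simp only [hd, Finset.card_filter]
  -- split diagonal
  have hsplit : ∑ a ∈ A, ∑ b ∈ A, (T a ∩ T b).card
      = ∑ a ∈ A, (T a).card + ∑ a ∈ A, ∑ b ∈ A.erase a, (T a ∩ T b).card := by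
    rw [← Finset.sum_add_distrib]
    refine Finset.sum_congr rfl fun a ha => ?_
    rw [← Finset.add_sum_erase A _ ha, Finset.inter_self]
  -- move to reals
  set s : ℝ := ∑ i, (d i : ℝ) with hs
  have hsR : (↑(∑ a ∈ A, (T a).card) : ℝ) = s := by
    rw [hsum]; push_cast; rfl
  have h1 : (m : ℝ) * (η * k) ≤ s := by
    rw [← hsR]
    push_cast
    calc (m : ℝ) * (η * k) = ∑ _a ∈ A, η * k := by
          rw [Finset.sum_const, nsmul_eq_mul]
      _ ≤ ∑ a ∈ A, ((T a).card : ℝ) := by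
          refine Finset.sum_le_sum fun a ha => ?_
          simp only [hA, Finset.mem_filter] at ha
          exact ha.2
  have h2 : s ^ 2 ≤ (k : ℝ) * ∑ i, (d i : ℝ) ^ 2 := by
    have := sq_sum_le_card_mul_sum_sq (s := (Finset.univ : Finset (Fin k)))
      (f := fun i => (d i : ℝ))
    simpa [Fintype.card_fin] using this
  have h3 : ∑ i, (d i : ℝ) ^ 2 = s + ∑ a ∈ A, ∑ b ∈ A.erase a, ((T a ∩ T b).card : ℝ) := by
    have h := congrArg (fun n : ℕ => (n : ℝ)) (hsq.symm.trans hsplit)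
    push_cast at h
    have hsumR := congrArg (fun n : ℕ => (n : ℝ)) hsum
    push_cast at hsumR
    rw [hs]
    linarith [h, hsumR]
  have h4 : ∑ a ∈ A, ∑ b ∈ A.erase a, ((T a ∩ T b).card : ℝ)
      ≤ (m : ℝ) * (((m : ℝ) - 1) * (δ * k)) := by
    calc ∑ a ∈ A, ∑ b ∈ A.erase a, ((T a ∩ T b).card : ℝ)
        ≤ ∑ a ∈ A, ∑ _b ∈ A.erase a, (δ * k) := by
          refine Finset.sum_le_sum fun a ha => Finset.sum_le_sum fun b hb => ?_
          exact hpair a b (Finset.ne_of_mem_erase hb).symm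
      _ = ∑ a ∈ A, ((A.erase a).card : ℝ) * (δ * k) := by
          refine Finset.sum_congr rfl fun a ha => ?_
          rw [Finset.sum_const, nsmul_eq_mul]
      _ ≤ ∑ _a ∈ A, ((m : ℝ) - 1) * (δ * k) := by
          refine Finset.sum_le_sum fun a ha => ?_
          have : (A.erase a).card = m - 1 := by rw [Finset.card_erase_of_mem ha]
          rw [this, Nat.cast_sub hm1]
          push_cast
          exact le_rfl
      _ = (m : ℝ) * (((m : ℝ) - 1) * (δ * k)) := by
          rw [Finset.sum_const, nsmul_eq_mul]
  -- final arithmetic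
  by_contra hcon
  push_neg at hcon
  have hmη : 2 < (m : ℝ) * η := by
    rw [div_lt_iff₀ hη0] at hcon
    linarith
  have hkR : (1 : ℝ) ≤ (k : ℝ) := by exact_mod_cast hk
  have hm1R : (1 : ℝ) ≤ (m : ℝ) := by exact_mod_cast hm1
  have hkey : s ^ 2 ≤ (k : ℝ) * s + (k : ℝ) * ((m : ℝ) * (((m : ℝ) - 1) * (δ * k))) := by
    nlinarith [h2, h3, h4]
  have hse : 0 ≤ (s - (m : ℝ) * η * (k : ℝ)) * (s + (m : ℝ) * η * (k : ℝ) - (k : ℝ)) := by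
    apply mul_nonneg
    · nlinarith [h1]
    · nlinarith [h1, hmη, hkR]
  rw [h3] at h2
  have hP : (k : ℝ) * (∑ a ∈ A, ∑ b ∈ A.erase a, ((T a ∩ T b).card : ℝ))
      ≤ (k : ℝ) * ((m : ℝ) * (((m : ℝ) - 1) * (δ * k))) :=
    mul_le_mul_of_nonneg_left h4 (by positivity)
  have hq : ((m : ℝ) * η * k) ^ 2 - ((m : ℝ) * η * k) * k
      ≤ (k : ℝ) * ((m : ℝ) * (((m : ℝ) - 1) * (δ * k))) := by nlinarith [hse, h2, hP]
  have hk2 : (0 : ℝ) < (k : ℝ) ^ 2 := by positivity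
  have hdiv : (m : ℝ) ^ 2 * η ^ 2 - (m : ℝ) * η ≤ (m : ℝ) * ((m : ℝ) - 1) * δ := by
    refine (mul_le_mul_iff_of_pos_right hk2).mp ?_
    nlinarith [hq]
  have hmm : 0 ≤ (m : ℝ) * ((m : ℝ) - 1) := mul_nonneg (by positivity) (by linarith)
  have hB := mul_le_mul_of_nonneg_left hδη.le hmm
  nlinarith [hdiv, hB, hmη, hη0, sq_nonneg ((m : ℝ) * η - 2),
    mul_pos (lt_trans two_pos hmη) hη0]
end

section
/- Let F be a field, H ⊆ F a subset, and r ≥ 1 an integer. A polynomial P : Fʳ → F of degree at most D vanishes on Hʳ if and only if there exist polynomials P₁, …, P_r of degree at most D − |H| such that P(x) = Σ_{j∈[r]} g_H(x_j)·P_j(x), where g_H(t) := ∏_{h∈H} (t − h). -/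
open MvPolynomial

section Aux

variable {F : Type*} [Field F] {r : ℕ}

private lemma degreeOf_monomial_le (i : Fin r) (u : Fin r →₀ ℕ) (c : F) :
    degreeOf i (monomial u c) ≤ u i := by
  rcases eq_or_ne c 0 with rfl | hc
  · simp
  · rw [degreeOf_monomial_eq u i hc]

private lemma totalDegree_monomial_le' (u : Fin r →₀ ℕ) (c : F) :
    (monomial u c : MvPolynomial (Fin r) F).totalDegree ≤ u.sum fun _ e => e := by
  rcases eq_or_ne c 0 with rfl | hc
  · simp
  · rw [totalDegree_monomial u hc]

private lemma totalDegree_aeval_le (j : Fin r) (p : Polynomial F) :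
    (Polynomial.aeval (X j : MvPolynomial (Fin r) F) p).totalDegree ≤ p.natDegree := by
  rw [Polynomial.aeval_eq_sum_range]
  refine totalDegree_finsetSum_le (fun i hi => ?_)
  rw [smul_eq_C_mul]
  calc (C (p.coeff i) * X j ^ i).totalDegree
      ≤ (C (p.coeff i) : MvPolynomial (Fin r) F).totalDegree + (X j ^ i : MvPolynomial (Fin r) F).totalDegree :=
        totalDegree_mul _ _
    _ ≤ 0 + i := by
        gcongr
        · simp
        · exact (totalDegree_X_pow _ _).le
    _ ≤ p.natDegree := by
        simp only [zero_add]
        exact Nat.lt_succ_iff.mp (Finset.mem_range.mp hi)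

private lemma degreeOf_aeval_le (i j : Fin r) (p : Polynomial F) :
    degreeOf i (Polynomial.aeval (X j : MvPolynomial (Fin r) F) p) ≤
      if i = j then p.natDegree else 0 := by
  rw [Polynomial.aeval_eq_sum_range]
  refine (degreeOf_sum_le _ _ _).trans (Finset.sup_le (fun k hk => ?_))
  rw [smul_eq_C_mul]
  refine (degreeOf_mul_le _ _ _).trans ?_
  rw [degreeOf_C, zero_add]
  refine (degreeOf_pow_le _ _ _).trans ?_
  rcases eq_or_ne i j with rfl | hij
  · rw [if_pos rfl, degreeOf_X]
    rw [if_pos rfl, mul_one]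
    exact Nat.lt_succ_iff.mp (Finset.mem_range.mp hk)
  · rw [if_neg hij, degreeOf_X, if_neg hij, mul_zero]

/-- Single-variable reduction: divide `P` by `g_H(X j)`. -/
private lemma redOne (H : Finset F) (hH : H.Nonempty) (j : Fin r)
    (P : MvPolynomial (Fin r) F) :
    ∃ Q R : MvPolynomial (Fin r) F,
      P = (∏ h ∈ H, (X j - MvPolynomial.C h)) * Q + R ∧
      R.degreeOf j < H.card ∧
      (∀ i, R.degreeOf i ≤ P.degreeOf i) ∧
      R.totalDegree ≤ P.totalDegree ∧
      Q.totalDegree ≤ P.totalDegree - H.card := by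
  classical
  set g : Polynomial F := ∏ h ∈ H, (Polynomial.X - Polynomial.C h) with hg
  have hmonic : g.Monic := Polynomial.monic_prod_of_monic _ _ fun h _ => Polynomial.monic_X_sub_C h
  have hgdeg : g.natDegree = H.card := by
    rw [hg, Polynomial.natDegree_prod _ _ (fun h _ => Polynomial.X_sub_C_ne_zero h)]
    simp
  have hn : 0 < H.card := Finset.card_pos.mpr hH
  have hg1 : g ≠ 1 := by
    intro h
    rw [h, Polynomial.natDegree_one] at hgdeg
    omega
  have haevalg : Polynomial.aeval (X j : MvPolynomial (Fin r) F) g =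
      ∏ h ∈ H, (X j - MvPolynomial.C h) := by
    rw [hg, map_prod]
    simp [Polynomial.aeval_X, MvPolynomial.algebraMap_eq]
  have hmod_le : ∀ d : ℕ, (Polynomial.X ^ d %ₘ g).natDegree ≤ d := by
    intro d
    rcases lt_or_ge d H.card with h | h
    · rw [(Polynomial.modByMonic_eq_self_iff hmonic).mpr ?_, Polynomial.natDegree_X_pow]
      rw [Polynomial.degree_X_pow, Polynomial.degree_eq_natDegree hmonic.ne_zero, hgdeg]
      exact_mod_cast h
    · exact (Polynomial.natDegree_modByMonic_le _ hmonic).trans (hgdeg ▸ h)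
  -- quotient and remainder pieces per monomial
  set quo : (Fin r →₀ ℕ) → MvPolynomial (Fin r) F := fun a =>
    monomial (a.erase j) (coeff a P) *
      Polynomial.aeval (X j : MvPolynomial (Fin r) F) (Polynomial.X ^ (a j) /ₘ g) with hquo
  set rem : (Fin r →₀ ℕ) → MvPolynomial (Fin r) F := fun a =>
    monomial (a.erase j) (coeff a P) *
      Polynomial.aeval (X j : MvPolynomial (Fin r) F) (Polynomial.X ^ (a j) %ₘ g) with hrem
  refine ⟨∑ a ∈ P.support, quo a, ∑ a ∈ P.support, rem a, ?_, ?_, ?_, ?_, ?_⟩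
  · -- decomposition
    conv_lhs => rw [← support_sum_monomial_coeff P]
    rw [Finset.mul_sum, ← Finset.sum_add_distrib]
    refine Finset.sum_congr rfl (fun a _ => ?_)
    have key : (monomial a (coeff a P) : MvPolynomial (Fin r) F) =
        monomial (a.erase j) (coeff a P) *
          Polynomial.aeval (X j : MvPolynomial (Fin r) F) ((Polynomial.X : Polynomial F) ^ (a j)) := by
      simp only [map_pow, Polynomial.aeval_X]
      rw [X_pow_eq_monomial, monomial_mul, mul_one, Finsupp.erase_add_single]
    have hdiv : (Polynomial.X ^ (a j) : Polynomial F) =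
        g * (Polynomial.X ^ (a j) /ₘ g) + Polynomial.X ^ (a j) %ₘ g := by
      rw [add_comm, Polynomial.modByMonic_add_div _ g]
    rw [key]
    conv_lhs => rw [hdiv]
    rw [map_add, map_mul, haevalg]
    ring
  · -- degreeOf j of remainder < card
    refine lt_of_le_of_lt (degreeOf_sum_le _ _ _) ?_
    rw [Finset.sup_lt_iff (by exact_mod_cast hn)]
    intro a _
    refine lt_of_le_of_lt (degreeOf_mul_le _ _ _) ?_
    have h1 := degreeOf_monomial_le j (a.erase j) (coeff a P)
    rw [Finsupp.erase_same] at h1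
    have h2 := degreeOf_aeval_le j j (Polynomial.X ^ (a j) %ₘ g)
    rw [if_pos rfl] at h2
    have h3 : (Polynomial.X ^ (a j) %ₘ g).natDegree < H.card := by
      rw [← hgdeg]; exact Polynomial.natDegree_modByMonic_lt _ hmonic hg1
    omega
  · -- degreeOf bounds of remainder
    intro i
    refine (degreeOf_sum_le _ _ _).trans (Finset.sup_le (fun a ha => ?_))
    have hai : a i ≤ P.degreeOf i := by
      rw [degreeOf_eq_sup]
      exact Finset.le_sup (f := fun m : Fin r →₀ ℕ => m i) ha
    refine (degreeOf_mul_le _ _ _).trans ?_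
    have h1 := degreeOf_monomial_le i (a.erase j) (coeff a P)
    have h2 := degreeOf_aeval_le i j (Polynomial.X ^ (a j) %ₘ g)
    have h3 := hmod_le (a j)
    rcases eq_or_ne i j with rfl | hij
    · rw [Finsupp.erase_same] at h1
      rw [if_pos rfl] at h2
      omega
    · rw [Finsupp.erase_ne hij] at h1
      rw [if_neg hij] at h2
      omega
  · -- total degree of remainder
    refine totalDegree_finsetSum_le (fun a ha => ?_)
    have hs : a.sum (fun _ e => e) ≤ P.totalDegree := le_totalDegree ha
    have hsum : (a.erase j).sum (fun _ e => e) + a j = a.sum (fun _ e => e) := by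
      conv_rhs => rw [← Finsupp.erase_add_single j a]
      rw [Finsupp.sum_add_index' (fun _ => rfl) (fun _ _ _ => rfl),
        Finsupp.sum_single_index rfl]
    refine (totalDegree_mul _ _).trans ?_
    have h1 := totalDegree_monomial_le' (a.erase j) (coeff a P)
    have h2 := totalDegree_aeval_le j (Polynomial.X ^ (a j) %ₘ g)
    have h3 := hmod_le (a j)
    omega
  · -- total degree of quotient
    refine totalDegree_finsetSum_le (fun a ha => ?_)
    have hs : a.sum (fun _ e => e) ≤ P.totalDegree := le_totalDegree ha
    have hsum : (a.erase j).sum (fun _ e => e) + a j = a.sum (fun _ e => e) := by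
      conv_rhs => rw [← Finsupp.erase_add_single j a]
      rw [Finsupp.sum_add_index' (fun _ => rfl) (fun _ _ _ => rfl),
        Finsupp.sum_single_index rfl]
    rcases lt_or_ge (a j) H.card with hlt | hge
    · have hzero : (Polynomial.X ^ (a j) /ₘ g) = 0 := by
        refine (Polynomial.divByMonic_eq_zero_iff hmonic).mpr ?_
        rw [Polynomial.degree_X_pow, Polynomial.degree_eq_natDegree hmonic.ne_zero, hgdeg]
        exact_mod_cast hlt
      simp only [hquo, hzero, map_zero, mul_zero, totalDegree_zero]
      exact Nat.zero_le _
    · refine (totalDegree_mul _ _).trans ?_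
      have h1 := totalDegree_monomial_le' (a.erase j) (coeff a P)
      have h2 := totalDegree_aeval_le j (Polynomial.X ^ (a j) /ₘ g)
      have h3 : (Polynomial.X ^ (a j) /ₘ g).natDegree = a j - H.card := by
        rw [Polynomial.natDegree_divByMonic _ hmonic, Polynomial.natDegree_X_pow, hgdeg]
      omega

/-- Reduce simultaneously in all variables of `s`. -/
private lemma redAll (H : Finset F) (hH : H.Nonempty) (s : Finset (Fin r))
    (P : MvPolynomial (Fin r) F) :
    ∃ (Q : Fin r → MvPolynomial (Fin r) F) (R : MvPolynomial (Fin r) F),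
      P = (∑ j ∈ s, (∏ h ∈ H, (X j - MvPolynomial.C h)) * Q j) + R ∧
      (∀ j ∈ s, R.degreeOf j < H.card) ∧
      (∀ j, R.degreeOf j ≤ P.degreeOf j) ∧
      R.totalDegree ≤ P.totalDegree ∧
      (∀ j, (Q j).totalDegree ≤ P.totalDegree - H.card) := by
  classical
  induction s using Finset.induction_on generalizing P with
  | empty => exact ⟨fun _ => 0, P, by simp, by simp, fun _ => le_rfl, le_rfl, by simp⟩
  | @insert j s hj ih =>
    obtain ⟨Q₀, R₁, hdec, hdj, hdi, htot, hq0⟩ := redOne H hH j P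
    obtain ⟨Q, R, hdec', hdj', hdi', htot', hq'⟩ := ih R₁
    refine ⟨Function.update Q j Q₀, R, ?_, ?_, ?_, ?_, ?_⟩
    · rw [Finset.sum_insert hj, Function.update_self]
      have : ∀ i ∈ s, (∏ h ∈ H, (X i - MvPolynomial.C h)) *
          Function.update Q j Q₀ i = (∏ h ∈ H, (X i - MvPolynomial.C h)) * Q i := by
        intro i hi
        rw [Function.update_of_ne (by rintro rfl; exact hj hi)]
      rw [Finset.sum_congr rfl this, hdec, hdec']
      ring
    · intro i hi
      rcases Finset.mem_insert.mp hi with rfl | hi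
      · exact lt_of_le_of_lt (hdi' i) hdj
      · exact hdj' i hi
    · exact fun i => (hdi' i).trans (hdi i)
    · exact htot'.trans htot
    · intro i
      rcases eq_or_ne i j with rfl | hij
      · rw [Function.update_self]; exact hq0
      · rw [Function.update_of_ne hij]
        exact (hq' i).trans (Nat.sub_le_sub_right htot _)

/-- A polynomial of degree `< |H|` in each variable vanishing on `H^m` is zero. -/
private lemma vanish_eq_zero (H : Finset F) :
    ∀ {m : ℕ} (R : MvPolynomial (Fin m) F),
      (∀ j, R.degreeOf j < H.card) →
      (∀ x : Fin m → F, (∀ j, x j ∈ H) → eval x R = 0) → R = 0 := by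
  intro m
  induction m with
  | zero =>
    intro R _ hev
    obtain ⟨c, rfl⟩ := MvPolynomial.C_surjective (Fin 0) R
    have := hev Fin.elim0 (fun j => j.elim0)
    simpa using this
  | succ m ih =>
    intro R hdeg hev
    set q := finSuccEquiv F m R with hq
    have hq0 : q = 0 := by
      ext i : 1
      rw [Polynomial.coeff_zero]
      refine ih _ (fun j => ?_) (fun x hx => ?_)
      · exact lt_of_le_of_lt (degreeOf_coeff_finSuccEquiv R j i) (hdeg j.succ)
      · -- the univariate specialization vanishes on H
        have hu : Polynomial.map (eval x) q = 0 := by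
          refine Polynomial.eq_zero_of_natDegree_lt_card_of_eval_eq_zero' _ H (fun y hy => ?_) ?_
          · rw [← eval_eq_eval_mv_eval']
            refine hev _ (fun j => ?_)
            refine Fin.cases ?_ ?_ j
            · simpa using hy
            · intro k; simpa using hx k
          · refine lt_of_le_of_lt Polynomial.natDegree_map_le ?_
            rw [hq, natDegree_finSuccEquiv]
            exact hdeg 0
        have := congrArg (fun p => Polynomial.coeff p i) hu
        simpa [Polynomial.coeff_map] using this
    have : R = (finSuccEquiv F m).symm q := by rw [hq, AlgEquiv.symm_apply_apply]
    rw [this, hq0, map_zero]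

end Aux

/-- Algebraic characterization of vanishing on a subcube: a polynomial `P` in `r`
variables of total degree at most `D` vanishes on `H^r` iff it can be written as
`∑ j, g_H(x_j) * P_j` with each `P_j` of total degree at most `D - |H|`, where
`g_H(t) = ∏_{h ∈ H} (t - h)`. -/
theorem stmt2 {F : Type*} [Field F] (H : Finset F) (r : ℕ) (hr : 1 ≤ r) (D : ℕ)
    (P : MvPolynomial (Fin r) F) (hdeg : P.totalDegree ≤ D) :
    (∀ x : Fin r → F, (∀ j, x j ∈ H) → eval x P = 0) ↔
      ∃ Q : Fin r → MvPolynomial (Fin r) F,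
        (∀ j, (Q j).totalDegree ≤ D - H.card) ∧
        P = ∑ j : Fin r, (∏ h ∈ H, (X j - MvPolynomial.C h)) * Q j := by
  classical
  constructor
  · intro hvan
    rcases H.eq_empty_or_nonempty with rfl | hH
    · refine ⟨fun j => if j = ⟨0, hr⟩ then P else 0, fun j => ?_, ?_⟩
      · rcases eq_or_ne j ⟨0, hr⟩ with rfl | hj
        · simpa using hdeg
        · simp [hj]
      · simp [Finset.sum_ite_eq']
    · obtain ⟨Q, R, hdec, hdj, _, _, hq⟩ := redAll H hH Finset.univ P
      have hR0 : R = 0 := by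
        refine vanish_eq_zero H R (fun j => hdj j (Finset.mem_univ j)) (fun x hx => ?_)
        have hgz : ∀ j : Fin r,
            eval x ((∏ h ∈ H, (X j - MvPolynomial.C h)) * Q j) = 0 := by
          intro j
          rw [map_mul, map_prod]
          have : ∏ h ∈ H, eval x (X j - MvPolynomial.C h) = 0 :=
            Finset.prod_eq_zero (hx j) (by simp)
          rw [this, zero_mul]
        have hP := hvan x hx
        rw [hdec, map_add, map_sum, Finset.sum_eq_zero (fun j _ => hgz j), zero_add] at hP
        exact hP
      refine ⟨Q, fun j => (hq j).trans (Nat.sub_le_sub_right hdeg _), ?_⟩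
      rw [hdec, hR0, add_zero]
  · rintro ⟨Q, _, rfl⟩ x hx
    rw [map_sum]
    refine Finset.sum_eq_zero (fun j _ => ?_)
    rw [map_mul, map_prod]
    have : ∏ h ∈ H, eval x (X j - MvPolynomial.C h) = 0 :=
      Finset.prod_eq_zero (hx j) (by simp)
    rw [this, zero_mul]
end

section
/- Let I be a label cover instance with no isolated vertices and Î = Bal(I) its balanced regularization. For any deterministic assignment π̂ to Î, let Proj_I(π̂) be the random assignment to I obtained by independently choosing a uniform copy index in [deg(u)] for each left vertex u and a uniform copy index in [deg(v)] for each right vertex v, and reading off the labels of the chosen copies. Then the expected fraction of constraints of I satisfied by Proj_I(π̂) equals the fraction of constraints of Î satisfied by π̂. -/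
open Finset

lemma natCard_subtype_sum {X : Type*} [Fintype X] (Q : X → Prop) [DecidablePred Q] :
    (Nat.card {x : X // Q x} : ℝ) = ∑ x : X, if Q x then (1:ℝ) else 0 := by
  rw [Nat.card_eq_fintype_card, Fintype.card_subtype, Finset.card_filter]
  push_cast
  rfl

lemma sum_pi_eval {ι : Type*} [Fintype ι] [DecidableEq ι] (d : ι → ℕ) (u : ι)
    (g : Fin (d u) → ℝ) :
    (d u : ℝ) * ∑ σ : ∀ i, Fin (d i), g (σ u) =
      (Fintype.card (∀ i, Fin (d i)) : ℝ) * ∑ i, g i := by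
  classical
  have hcard : Fintype.card (∀ i, Fin (d i)) =
      d u * Fintype.card (∀ i : {j // j ≠ u}, Fin (d i)) := by
    rw [Fintype.card_congr (Equiv.piSplitAt u (fun i => Fin (d i))), Fintype.card_prod,
      Fintype.card_fin]
  have hsum : ∑ σ : ∀ i, Fin (d i), g (σ u) =
      (Fintype.card (∀ i : {j // j ≠ u}, Fin (d i)) : ℝ) * ∑ i, g i := by
    rw [Fintype.sum_equiv (Equiv.piSplitAt u (fun i => Fin (d i)))
      (fun σ => g (σ u)) (fun p => g p.1) (fun σ => rfl)]
    rw [Fintype.sum_prod_type]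
    simp [Finset.sum_const, mul_comm, Finset.sum_mul]
  rw [hsum, hcard]
  push_cast
  ring

lemma sum_prod3 {A B C : Type*} [Fintype A] [Fintype B] [Fintype C] (F : A → B → ℝ) :
    ∑ p : A × B × C, F p.1 p.2.1 = (Fintype.card C : ℝ) * ∑ a, ∑ b, F a b := by
  rw [Fintype.sum_prod_type]
  simp only [Fintype.sum_prod_type, Finset.sum_const, Finset.card_univ, nsmul_eq_mul]
  rw [Finset.mul_sum]
  exact Finset.sum_congr rfl fun a _ => (Finset.mul_sum _ _ _).symm

/-- Value preservation of the projection recovery for the balanced regularization: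
the expectation (over independent uniform choices of one copy per original vertex)
of the fraction of constraints of `I` satisfied by the projected assignment equals
the fraction of copied constraints of `Bal(I)` satisfied by the given assignment.
Each copied edge `(e,i,j,t)` inherits the predicate `P e.1` and the projection `f e`. -/
theorem stmt6 {U V SU SV : Type*} [Fintype U] [Fintype V] [DecidableEq U] [DecidableEq V]
    (E : Finset (U × V)) (degU : U → ℕ) (degV : V → ℕ)
    (hdegU : ∀ u, degU u = (E.filter (fun e => e.1 = u)).card)
    (hdegV : ∀ v, degV v = (E.filter (fun e => e.2 = v)).card)
    (hU : ∀ u, 0 < degU u) (hV : ∀ v, 0 < degV v)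
    (K : ℕ) (hK : ∀ e ∈ E, 0 < K ∧ (degU e.1 * degV e.2) ∣ K)
    (P : U → SU → Prop) (f : U × V → SU → SV)
    (piU : ∀ u, Fin (degU u) → SU) (piV : ∀ v, Fin (degV v) → SV) :
    (∑ σU : ∀ u, Fin (degU u), ∑ σV : ∀ v, Fin (degV v),
        (Nat.card {e : U × V // e ∈ E ∧ P e.1 (piU e.1 (σU e.1)) ∧
            f e (piU e.1 (σU e.1)) = piV e.2 (σV e.2)} : ℝ) / (E.card : ℝ))
        / ((Fintype.card (∀ u, Fin (degU u)) : ℝ) * (Fintype.card (∀ v, Fin (degV v)) : ℝ))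
    = (Nat.card {x : Σ e : E, Fin (degU (e : U × V).1) × Fin (degV (e : U × V).2) ×
            Fin (K / (degU (e : U × V).1 * degV (e : U × V).2)) //
          P (x.1 : U × V).1 (piU (x.1 : U × V).1 x.2.1) ∧
          f (x.1 : U × V) (piU (x.1 : U × V).1 x.2.1) = piV (x.1 : U × V).2 x.2.2.1} : ℝ)
      / (Nat.card (Σ e : E, Fin (degU (e : U × V).1) × Fin (degV (e : U × V).2) ×
            Fin (K / (degU (e : U × V).1 * degV (e : U × V).2))) : ℝ) := by
  classical
  by_cases hE : E = ∅
  · subst hE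
    simp [Nat.card_eq_fintype_card]
  have hEne : E.Nonempty := Finset.nonempty_iff_ne_empty.2 hE
  obtain ⟨e₀, he₀⟩ := hEne
  have hKpos : 0 < K := (hK e₀ he₀).1
  have hK0R : ((K : ℝ)) ≠ 0 := by exact_mod_cast hKpos.ne'
  set ind : (e : U × V) → Fin (degU e.1) → Fin (degV e.2) → ℝ :=
    fun e i j => if P e.1 (piU e.1 i) ∧ f e (piU e.1 i) = piV e.2 j then 1 else 0 with hind
  set c : U × V → ℝ := fun e => ∑ i, ∑ j, ind e i j with hc
  set NU : ℝ := (Fintype.card (∀ u, Fin (degU u)) : ℝ) with hNU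
  set NV : ℝ := (Fintype.card (∀ v, Fin (degV v)) : ℝ) with hNV
  have hNUpos : (0:ℝ) < NU := by
    have : Nonempty (∀ u, Fin (degU u)) := ⟨fun u => ⟨0, hU u⟩⟩
    rw [hNU]
    exact_mod_cast Fintype.card_pos
  have hNVpos : (0:ℝ) < NV := by
    have : Nonempty (∀ v, Fin (degV v)) := ⟨fun v => ⟨0, hV v⟩⟩
    rw [hNV]
    exact_mod_cast Fintype.card_pos
  have hdU0 : ∀ e : U × V, ((degU e.1 : ℝ) ≠ 0) := fun e => by
    exact_mod_cast (hU e.1).ne'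
  have hdV0 : ∀ e : U × V, ((degV e.2 : ℝ) ≠ 0) := fun e => by
    exact_mod_cast (hV e.2).ne'
  have hm : ∀ e ∈ E, (degU e.1 * degV e.2) * (K / (degU e.1 * degV e.2)) = K :=
    fun e he => Nat.mul_div_cancel' (hK e he).2
  have hmR : ∀ e ∈ E, ((K / (degU e.1 * degV e.2) : ℕ) : ℝ)
      = (K : ℝ) / ((degU e.1 : ℝ) * (degV e.2 : ℝ)) := by
    intro e he
    rw [eq_div_iff (mul_ne_zero (hdU0 e) (hdV0 e))]
    rw [mul_comm]
    exact_mod_cast hm e he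
  -- key per-edge computation
  have hT : ∀ e ∈ E, (∑ σU : ∀ u, Fin (degU u), ∑ σV : ∀ v, Fin (degV v),
      ind e (σU e.1) (σV e.2))
      = NU * NV * c e / ((degU e.1 : ℝ) * (degV e.2 : ℝ)) := by
    intro e _
    have h2 : ∀ σU : ∀ u, Fin (degU u),
        (degV e.2 : ℝ) * ∑ σV : ∀ v, Fin (degV v), ind e (σU e.1) (σV e.2)
          = NV * ∑ j, ind e (σU e.1) j :=
      fun σU => sum_pi_eval degV e.2 (fun j => ind e (σU e.1) j)
    have h1 : (degU e.1 : ℝ) * ∑ σU : ∀ u, Fin (degU u), (∑ j, ind e (σU e.1) j)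
        = NU * c e := sum_pi_eval degU e.1 (fun i => ∑ j, ind e i j)
    have step1 : (degV e.2 : ℝ) * ∑ σU : ∀ u, Fin (degU u),
        ∑ σV : ∀ v, Fin (degV v), ind e (σU e.1) (σV e.2)
        = NV * ∑ σU : ∀ u, Fin (degU u), ∑ j, ind e (σU e.1) j := by
      rw [Finset.mul_sum, Finset.mul_sum]
      exact Finset.sum_congr rfl (fun σU _ => h2 σU)
    rw [eq_div_iff (mul_ne_zero (hdU0 e) (hdV0 e))]
    calc (∑ σU : ∀ u, Fin (degU u), ∑ σV : ∀ v, Fin (degV v), ind e (σU e.1) (σV e.2))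
          * ((degU e.1 : ℝ) * (degV e.2 : ℝ))
        = (degU e.1 : ℝ) * ((degV e.2 : ℝ) * ∑ σU : ∀ u, Fin (degU u),
            ∑ σV : ∀ v, Fin (degV v), ind e (σU e.1) (σV e.2)) := by ring
      _ = (degU e.1 : ℝ) * (NV * ∑ σU : ∀ u, Fin (degU u), ∑ j, ind e (σU e.1) j) := by
          rw [step1]
      _ = NV * ((degU e.1 : ℝ) * ∑ σU : ∀ u, Fin (degU u), ∑ j, ind e (σU e.1) j) := by ring
      _ = NV * (NU * c e) := by rw [h1]
      _ = NU * NV * c e := by ring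
  set S : ℝ := ∑ e ∈ E, c e / ((degU e.1 : ℝ) * (degV e.2 : ℝ)) with hS
  -- LHS
  have lhs_eq : (∑ σU : ∀ u, Fin (degU u), ∑ σV : ∀ v, Fin (degV v),
        (Nat.card {e : U × V // e ∈ E ∧ P e.1 (piU e.1 (σU e.1)) ∧
            f e (piU e.1 (σU e.1)) = piV e.2 (σV e.2)} : ℝ) / (E.card : ℝ)) / (NU * NV)
      = S / (E.card : ℝ) := by
    have hNum : ∀ (σU : ∀ u, Fin (degU u)) (σV : ∀ v, Fin (degV v)),
        (Nat.card {e : U × V // e ∈ E ∧ P e.1 (piU e.1 (σU e.1)) ∧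
            f e (piU e.1 (σU e.1)) = piV e.2 (σV e.2)} : ℝ)
        = ∑ e ∈ E, ind e (σU e.1) (σV e.2) := by
      intro σU σV
      rw [natCard_subtype_sum]
      rw [← Finset.univ_inter E, ← Finset.sum_ite_mem]
      apply Finset.sum_congr rfl
      intro x _
      by_cases hx : x ∈ E <;> simp [hx, hind]
    have hSwap : ∑ σU : ∀ u, Fin (degU u), ∑ σV : ∀ v, Fin (degV v),
        (∑ e ∈ E, ind e (σU e.1) (σV e.2))
        = ∑ e ∈ E, ∑ σU : ∀ u, Fin (degU u), ∑ σV : ∀ v, Fin (degV v),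
            ind e (σU e.1) (σV e.2) :=
      calc ∑ σU : ∀ u, Fin (degU u), ∑ σV : ∀ v, Fin (degV v),
            (∑ e ∈ E, ind e (σU e.1) (σV e.2))
          = ∑ σU : ∀ u, Fin (degU u), ∑ e ∈ E, ∑ σV : ∀ v, Fin (degV v),
              ind e (σU e.1) (σV e.2) :=
            Finset.sum_congr rfl (fun σU _ => Finset.sum_comm)
        _ = ∑ e ∈ E, ∑ σU : ∀ u, Fin (degU u), ∑ σV : ∀ v, Fin (degV v),
              ind e (σU e.1) (σV e.2) := Finset.sum_comm
    have A2 : (∑ σU : ∀ u, Fin (degU u), ∑ σV : ∀ v, Fin (degV v),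
        (Nat.card {e : U × V // e ∈ E ∧ P e.1 (piU e.1 (σU e.1)) ∧
            f e (piU e.1 (σU e.1)) = piV e.2 (σV e.2)} : ℝ) / (E.card : ℝ))
        = (∑ e ∈ E, ∑ σU : ∀ u, Fin (degU u), ∑ σV : ∀ v, Fin (degV v),
            ind e (σU e.1) (σV e.2)) / (E.card : ℝ) := by
      simp only [hNum, ← Finset.sum_div]
      rw [hSwap]
    have A3 : (∑ e ∈ E, ∑ σU : ∀ u, Fin (degU u), ∑ σV : ∀ v, Fin (degV v),
        ind e (σU e.1) (σV e.2)) = NU * NV * S := by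
      rw [Finset.sum_congr rfl hT, hS, Finset.mul_sum]
      exact Finset.sum_congr rfl (fun e _ => (mul_div_assoc _ _ _))
    rw [A2, A3, div_div, mul_comm ((E.card : ℝ)) (NU * NV),
      mul_div_mul_left _ _ (mul_ne_zero hNUpos.ne' hNVpos.ne')]
  -- RHS denominator
  have denom_eq : ((Nat.card (Σ e : E, Fin (degU (e : U × V).1) × Fin (degV (e : U × V).2) ×
        Fin (K / (degU (e : U × V).1 * degV (e : U × V).2))) : ℕ) : ℝ)
      = (E.card : ℝ) * (K : ℝ) := by
    rw [Nat.card_eq_fintype_card, Fintype.card_sigma]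
    have h : ∀ e : {x // x ∈ E}, Fintype.card (Fin (degU (e : U × V).1) ×
        Fin (degV (e : U × V).2) × Fin (K / (degU (e : U × V).1 * degV (e : U × V).2))) = K := by
      intro e
      rw [Fintype.card_prod, Fintype.card_prod, Fintype.card_fin, Fintype.card_fin,
        Fintype.card_fin, ← mul_assoc]
      exact hm e e.2
    rw [Finset.sum_congr rfl (fun e _ => h e), Finset.sum_const, Finset.card_univ,
      Fintype.card_coe, smul_eq_mul]
    push_cast
    ring
  -- RHS numerator
  have num_eq : ((Nat.card {x : Σ e : E, Fin (degU (e : U × V).1) × Fin (degV (e : U × V).2) ×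
        Fin (K / (degU (e : U × V).1 * degV (e : U × V).2)) //
      P (x.1 : U × V).1 (piU (x.1 : U × V).1 x.2.1) ∧
      f (x.1 : U × V) (piU (x.1 : U × V).1 x.2.1) = piV (x.1 : U × V).2 x.2.2.1} : ℕ) : ℝ)
      = (K : ℝ) * S := by
    rw [natCard_subtype_sum]
    rw [← Finset.univ_sigma_univ, Finset.sum_sigma]
    have h : ∀ e : {x // x ∈ E},
        (∑ p : Fin (degU (e : U × V).1) × Fin (degV (e : U × V).2) ×
            Fin (K / (degU (e : U × V).1 * degV (e : U × V).2)),
          if P (e : U × V).1 (piU (e : U × V).1 p.1) ∧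
              f (e : U × V) (piU (e : U × V).1 p.1) = piV (e : U × V).2 p.2.1
            then (1:ℝ) else 0)
        = ((K / (degU (e : U × V).1 * degV (e : U × V).2) : ℕ) : ℝ) * c (e : U × V) := by
      intro e
      rw [sum_prod3 (fun i j => if P (e : U × V).1 (piU (e : U × V).1 i) ∧
          f (e : U × V) (piU (e : U × V).1 i) = piV (e : U × V).2 j then (1:ℝ) else 0)]
      simp only [Fintype.card_fin, hc, hind]
    rw [Finset.sum_congr rfl (fun e _ => h e)]
    rw [Finset.sum_coe_sort E (fun e => ((K / (degU e.1 * degV e.2) : ℕ) : ℝ) * c e)]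
    rw [hS, Finset.mul_sum]
    refine Finset.sum_congr rfl (fun e he => ?_)
    rw [hmR e he, div_mul_eq_mul_div, mul_div_assoc]
  rw [lhs_eq, num_eq, denom_eq, mul_comm ((E.card : ℝ)) ((K : ℝ)),
    mul_div_mul_left _ _ hK0R]
end

section
/- In the Feige–Lund–Yannakakis reduction from label cover to set cover built on an (m,l)-set system, fix an edge e = (u,v) of the label cover instance and a cover S of the set cover instance with recovered label sets L_u ⊆ Σ_U (admissible labels chosen at u) and L_v ⊆ Σ_V (labels chosen at v). If |L_u| + |L_v| ≤ l, then the recovery that picks a uniform label π(u) from L_u and a uniform label π(v) from L_v independently satisfies edge e with probability at least 4/l². -/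
/-- `(B, C)` is an `(m, l)`-set system: any collection of at most `l` sets among
`C₁,…,C_m` and their complements that covers `B` must contain some `C_i` together
with its complement.  A signed index `(i, true)` stands for `C i` and `(i, false)`
for its complement. -/
def IsSetSystem {B : Type*} (m l : ℕ) (C : Fin m → Set B) : Prop :=
  ∀ S : Finset (Fin m × Bool), S.card ≤ l →
    (∀ x : B, ∃ p ∈ S, x ∈ (if p.2 then C p.1 else (C p.1)ᶜ)) →
    ∃ i : Fin m, (i, true) ∈ S ∧ (i, false) ∈ S

/-- Slice soundness of the label-cover-to-set-cover reduction: on the slice of an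
edge `e = (u,v)` with projection `f`, the selected sets `C x` (for `x ∈ L_v`) and
complements of `C (f y)` (for `y ∈ L_u`) cover `B`; if `|L_u| + |L_v| ≤ l`, then
choosing `π(u)` uniformly from `L_u` and `π(v)` uniformly from `L_v` independently
satisfies the edge (i.e. `f (π(u)) = π(v)`) with probability at least `4/l²`. -/
theorem stmt12 {B SU : Type*} (m l : ℕ) (C : Fin m → Set B)
    (hsys : IsSetSystem m l C)
    (f : SU → Fin m) (Lu : Finset SU) (Lv : Finset (Fin m))
    (hcover : ∀ b : B, (∃ x ∈ Lv, b ∈ C x) ∨ (∃ y ∈ Lu, b ∉ C (f y)))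
    (hsize : Lu.card + Lv.card ≤ l) :
    (4 : ℝ) / (l : ℝ) ^ 2 ≤
      (((Lu ×ˢ Lv).filter (fun p => f p.1 = p.2)).card : ℝ)
        / ((Lu.card : ℝ) * (Lv.card : ℝ)) := by
  classical
  set S : Finset (Fin m × Bool) :=
    Lv.image (fun x => (x, true)) ∪ Lu.image (fun y => (f y, false)) with hS
  have hcard : S.card ≤ l := by
    calc S.card ≤ (Lv.image (fun x => (x, true))).card
        + (Lu.image (fun y => (f y, false))).card := Finset.card_union_le _ _
      _ ≤ Lv.card + Lu.card :=
        Nat.add_le_add (Finset.card_image_le) (Finset.card_image_le)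
      _ ≤ l := by omega
  have hcov : ∀ x : B, ∃ p ∈ S, x ∈ (if p.2 then C p.1 else (C p.1)ᶜ) := by
    intro b
    rcases hcover b with ⟨x, hx, hbx⟩ | ⟨y, hy, hby⟩
    · exact ⟨(x, true), Finset.mem_union_left _ (Finset.mem_image_of_mem _ hx), by
        simpa using hbx⟩
    · exact ⟨(f y, false), Finset.mem_union_right _ (Finset.mem_image_of_mem _ hy), by
        simpa using hby⟩
  obtain ⟨i, hi1, hi2⟩ := hsys S hcard hcov
  have hiv : i ∈ Lv := by
    rcases Finset.mem_union.1 hi1 with h | h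
    · rcases Finset.mem_image.1 h with ⟨x, hx, hxe⟩
      obtain ⟨rfl, -⟩ := Prod.mk.injEq .. ▸ hxe
      exact hx
    · rcases Finset.mem_image.1 h with ⟨y, hy, hye⟩
      simp at hye
  obtain ⟨y, hy, hyi⟩ : ∃ y ∈ Lu, f y = i := by
    rcases Finset.mem_union.1 hi2 with h | h
    · rcases Finset.mem_image.1 h with ⟨x, hx, hxe⟩
      simp at hxe
    · rcases Finset.mem_image.1 h with ⟨y, hy, hye⟩
      exact ⟨y, hy, (Prod.mk.injEq .. ▸ hye).1⟩
  have hmem : (y, i) ∈ (Lu ×ˢ Lv).filter (fun p => f p.1 = p.2) :=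
    Finset.mem_filter.2 ⟨Finset.mem_product.2 ⟨hy, hiv⟩, hyi⟩
  have hN : 1 ≤ ((Lu ×ˢ Lv).filter (fun p => f p.1 = p.2)).card :=
    Finset.card_pos.2 ⟨_, hmem⟩
  have ha : 1 ≤ Lu.card := Finset.card_pos.2 ⟨_, hy⟩
  have hb : 1 ≤ Lv.card := Finset.card_pos.2 ⟨_, hiv⟩
  have hab : 4 * (Lu.card * Lv.card) ≤ l ^ 2 := by nlinarith [sq_nonneg (Lu.card - Lv.card : ℤ), hsize]
  have hl : (0 : ℝ) < (l : ℝ) := by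
    have : 2 ≤ l := by omega
    exact_mod_cast by omega
  rw [div_le_div_iff₀ (by positivity) (by positivity)]
  have hN' : (1 : ℝ) ≤ (((Lu ×ˢ Lv).filter (fun p => f p.1 = p.2)).card : ℝ) := by
    exact_mod_cast hN
  have hab' : 4 * ((Lu.card : ℝ) * Lv.card) ≤ (l : ℝ) ^ 2 := by exact_mod_cast hab
  nlinarith [hN', hab', mul_pos (show (0:ℝ) < Lu.card by exact_mod_cast ha) (show (0:ℝ) < Lv.card by exact_mod_cast hb)]
end

section
/- Let I = (U, F) be a set cover instance with maximum set size and maximum element frequency at most Γ, let G be the incidence graph of I augmented with helper vertices (each set vertex S_i connected to helper w_{⌈i/Γ⌉}). If I is feasible and D is a dominating set of G, then the recovery R(D) — consisting of all indices of selected set-vertices together with, for each selected element-vertex u, one fixed incident set index σ(u) — is a set cover of I with |R(D)| ≤ |D|. -/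
/-- Recovery of a set cover from a dominating set of the augmented incidence graph.
Vertices are elements (`Sum.inl u`), set indices (`Sum.inr (Sum.inl i)`), and helper
vertices (`Sum.inr (Sum.inr w)`); an element is adjacent to exactly the sets
containing it, and each set vertex `i` is adjacent to its helper `hW i`.  If the
instance is feasible (witnessed by a designated containing set `σ u ∋ u` for every
element `u`) and `D` is a dominating set, then the indices of selected set-vertices
together with the designated indices of selected element-vertices form a set cover
of size at most `|D|`. -/
theorem stmt14 {U W : Type*} [Fintype U] [DecidableEq U] [DecidableEq W]
    (m : ℕ) (S : Fin m → Finset U) (hW : Fin m → W)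
    (σ : U → Fin m) (hσ : ∀ u, u ∈ S (σ u))
    (G : SimpleGraph (U ⊕ (Fin m ⊕ W)))
    (hG : G = SimpleGraph.fromRel (fun x y =>
      (∃ u i, x = Sum.inl u ∧ y = Sum.inr (Sum.inl i) ∧ u ∈ S i) ∨
      (∃ i, x = Sum.inr (Sum.inl i) ∧ y = Sum.inr (Sum.inr (hW i)))))
    (D : Finset (U ⊕ (Fin m ⊕ W)))
    (hdom : ∀ v, v ∈ D ∨ ∃ d ∈ D, G.Adj v d) :
    (∀ u : U, ∃ i ∈ (Finset.univ.filter (fun i : Fin m => Sum.inr (Sum.inl i) ∈ D)) ∪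
        ((Finset.univ.filter (fun u : U => Sum.inl u ∈ D)).image σ), u ∈ S i) ∧
    ((Finset.univ.filter (fun i : Fin m => Sum.inr (Sum.inl i) ∈ D)) ∪
        ((Finset.univ.filter (fun u : U => Sum.inl u ∈ D)).image σ)).card ≤ D.card := by

  subst hG
  set R := (Finset.univ.filter (fun i : Fin m => Sum.inr (Sum.inl i) ∈ D)) ∪
      ((Finset.univ.filter (fun u : U => Sum.inl u ∈ D)).image σ) with hR
  constructor
  · intro u
    rcases hdom (Sum.inl u) with h | ⟨d, hd, hadj⟩
    · exact ⟨σ u, Finset.mem_union_right _ (Finset.mem_image.2 ⟨u, Finset.mem_filter.2 ⟨Finset.mem_univ u, h⟩, rfl⟩), hσ u⟩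
    · simp only [SimpleGraph.fromRel_adj] at hadj
      rcases hadj with ⟨-, hrel | hrel⟩
      · rcases hrel with ⟨u', i, h1, h2, h3⟩ | ⟨i, h1, h2⟩
        · cases h1
          exact ⟨i, Finset.mem_union_left _ (Finset.mem_filter.2 ⟨Finset.mem_univ i, h2 ▸ hd⟩), h3⟩
        · exact absurd h1 (by simp)
      · rcases hrel with ⟨u', i, h1, h2, h3⟩ | ⟨i, h1, h2⟩
        · exact absurd h2 (by simp)
        · exact absurd h2 (by simp)
  · classical
    set g : (U ⊕ (Fin m ⊕ W)) → Option (Fin m) := fun v =>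
      match v with
      | Sum.inl u => some (σ u)
      | Sum.inr (Sum.inl i) => some i
      | Sum.inr (Sum.inr _) => none with hg
    have hsub : R.image (fun i => some i) ⊆ D.image g := by
      intro x hx
      simp only [Finset.mem_image] at hx
      rcases hx with ⟨i, hi, rfl⟩
      rw [hR, Finset.mem_union] at hi
      rcases hi with hi | hi
      · simp only [Finset.mem_filter] at hi
        exact Finset.mem_image.2 ⟨Sum.inr (Sum.inl i), hi.2, rfl⟩
      · rcases Finset.mem_image.1 hi with ⟨u, hu, rfl⟩
        simp only [Finset.mem_filter] at hu
        exact Finset.mem_image.2 ⟨Sum.inl u, hu.2, rfl⟩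
    calc R.card = (R.image (fun i => some i)).card :=
          (Finset.card_image_of_injective _ (Option.some_injective _)).symm
      _ ≤ (D.image g).card := Finset.card_le_card hsub
      _ ≤ D.card := Finset.card_image_le
end

section
/- Let I and Ĩ be set cover instances on the same ground set and same indexed family that differ by toggling exactly one membership relation (u₀, S_j), with designated-set choices σ_I and σ_{Ĩ} defined by the same deterministic rule (smallest index of a containing set, or ⊥ if none). Then for every fixed vertex subset D of the common incidence graph vertex set, the recovered set covers satisfy |R_I(D) △ R_{Ĩ}(D)| ≤ 2. -/
/-- The set cover recovered from a fixed vertex subset `D` of the incidence graph of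
the set system `S`: indices of selected set-vertices, together with, for each
selected element-vertex `u`, the designated index of a set containing `u`, chosen
by the deterministic rule "smallest index of a containing set, or none". -/
def recoverCover {U W : Type*} [Fintype U] [DecidableEq U] [DecidableEq W]
    (m : ℕ) (S : Fin m → Finset U) (D : Finset (U ⊕ (Fin m ⊕ W))) : Finset (Fin m) :=
  (Finset.univ.filter (fun i : Fin m => Sum.inr (Sum.inl i) ∈ D)) ∪
  (Finset.univ.filter (fun i : Fin m => ∃ u : U, Sum.inl u ∈ D ∧
    (Finset.univ.filter (fun i' : Fin m => u ∈ S i')).min = (i : WithTop (Fin m))))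

/-- Stability of the recovery under one membership toggle: if the set systems `S`
and `St` agree everywhere except that the membership of `u₀` in the `j`-th set is
toggled, then for every fixed vertex subset `D` the recovered set covers differ in
at most two indices (symmetric difference of size at most `2`). -/
theorem stmt15 {U W : Type*} [Fintype U] [DecidableEq U] [DecidableEq W]
    (m : ℕ) (S St : Fin m → Finset U) (u₀ : U) (j : Fin m)
    (htoggle : ∀ (i : Fin m) (u : U), ¬(i = j ∧ u = u₀) → (u ∈ S i ↔ u ∈ St i))
    (hflip : (u₀ ∈ S j) ↔ ¬(u₀ ∈ St j))
    (D : Finset (U ⊕ (Fin m ⊕ W))) :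
    ((recoverCover m S D \ recoverCover m St D) ∪
     (recoverCover m St D \ recoverCover m S D)).card ≤ 2 := by
  classical
  set fS : WithTop (Fin m) := (Finset.univ.filter (fun i' : Fin m => u₀ ∈ S i')).min with hfS
  set fSt : WithTop (Fin m) := (Finset.univ.filter (fun i' : Fin m => u₀ ∈ St i')).min with hfSt
  have hsame : ∀ u : U, u ≠ u₀ →
      (Finset.univ.filter (fun i' : Fin m => u ∈ S i')) =
      (Finset.univ.filter (fun i' : Fin m => u ∈ St i')) := by
    intro u hu
    apply Finset.filter_congr
    intro i' _
    simpa using htoggle i' u (fun h => hu h.2)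
  have hsub : ((recoverCover m S D \ recoverCover m St D) ∪
      (recoverCover m St D \ recoverCover m S D)) ⊆
      (Finset.univ.filter (fun i : Fin m => fS = (i : WithTop (Fin m)))) ∪
      (Finset.univ.filter (fun i : Fin m => fSt = (i : WithTop (Fin m)))) := by
    intro i hi
    simp only [Finset.mem_union, Finset.mem_sdiff, recoverCover, Finset.mem_filter,
      Finset.mem_univ, true_and] at hi ⊢
    rcases hi with ⟨hin, hout⟩ | ⟨hin, hout⟩
    · rcases hin with hP | ⟨u, hu, hmin⟩
      · exact absurd (Or.inl hP) hout
      · by_cases h : u = u₀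
        · subst h; exact Or.inl hmin
        · exact absurd (Or.inr ⟨u, hu, (hsame u h) ▸ hmin⟩) hout
    · rcases hin with hP | ⟨u, hu, hmin⟩
      · exact absurd (Or.inl hP) hout
      · by_cases h : u = u₀
        · subst h; exact Or.inr hmin
        · exact absurd (Or.inr ⟨u, hu, (hsame u h).symm ▸ hmin⟩) hout
  have hcard1 : ∀ x : WithTop (Fin m),
      (Finset.univ.filter (fun i : Fin m => x = (i : WithTop (Fin m)))).card ≤ 1 := by
    intro x
    apply Finset.card_le_one.2
    intro a ha b hb
    simp only [Finset.mem_filter] at ha hb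
    exact_mod_cast ha.2 ▸ hb.2
  calc ((recoverCover m S D \ recoverCover m St D) ∪
      (recoverCover m St D \ recoverCover m S D)).card
      ≤ ((Finset.univ.filter (fun i : Fin m => fS = (i : WithTop (Fin m)))) ∪
        (Finset.univ.filter (fun i : Fin m => fSt = (i : WithTop (Fin m))))).card :=
        Finset.card_le_card hsub
    _ ≤ (Finset.univ.filter (fun i : Fin m => fS = (i : WithTop (Fin m)))).card +
        (Finset.univ.filter (fun i : Fin m => fSt = (i : WithTop (Fin m)))).card :=
        Finset.card_union_le _ _
    _ ≤ 1 + 1 := Nat.add_le_add (hcard1 fS) (hcard1 fSt)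
end

section
/- Let I be a feasible set cover instance with m sets, maximum set size at most Γ, and let G be the augmented incidence graph with ⌈m/Γ⌉ helper vertices. Then sc(I) ≤ ds(G) ≤ sc(I) + ⌈m/Γ⌉, where sc denotes the minimum set-cover size and ds the minimum dominating-set size. -/
/-- Sandwich between set cover and dominating set for the augmented incidence graph:
for a feasible set cover instance with `m` sets of size at most `Γ` (and element
frequency at most `Γ`), with `⌈m/Γ⌉` helper vertices (each set vertex `i` joined to
its helper `hW i`), the minimum dominating set size `ds(G)` satisfies
`sc(I) ≤ ds(G) ≤ sc(I) + ⌈m/Γ⌉`, where `sc(I)` is the minimum set cover size. -/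
theorem stmt18 {U W : Type*} [Fintype U] [DecidableEq U] [Fintype W] [DecidableEq W]
    (m Γ : ℕ) (hΓ : 1 ≤ Γ)
    (S : Fin m → Finset U)
    (hsize : ∀ i, (S i).card ≤ Γ)
    (hfreq : ∀ u : U, (Finset.univ.filter (fun i : Fin m => u ∈ S i)).card ≤ Γ)
    (hfeas : ∀ u : U, ∃ i, u ∈ S i)
    (hWcard : Fintype.card W = (m + Γ - 1) / Γ)
    (hW : Fin m → W)
    (G : SimpleGraph (U ⊕ (Fin m ⊕ W)))
    (hG : G = SimpleGraph.fromRel (fun x y =>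
      (∃ u i, x = Sum.inl u ∧ y = Sum.inr (Sum.inl i) ∧ u ∈ S i) ∨
      (∃ i, x = Sum.inr (Sum.inl i) ∧ y = Sum.inr (Sum.inr (hW i))))) :
    sInf {k : ℕ | ∃ R : Finset (Fin m), (∀ u : U, ∃ i ∈ R, u ∈ S i) ∧ R.card = k}
      ≤ sInf {k : ℕ | ∃ D : Finset (U ⊕ (Fin m ⊕ W)),
          (∀ v, v ∈ D ∨ ∃ d ∈ D, G.Adj v d) ∧ D.card = k} ∧
    sInf {k : ℕ | ∃ D : Finset (U ⊕ (Fin m ⊕ W)),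
          (∀ v, v ∈ D ∨ ∃ d ∈ D, G.Adj v d) ∧ D.card = k}
      ≤ sInf {k : ℕ | ∃ R : Finset (Fin m), (∀ u : U, ∃ i ∈ R, u ∈ S i) ∧ R.card = k}
        + (m + Γ - 1) / Γ := by
  subst hG
  set A := {k : ℕ | ∃ R : Finset (Fin m), (∀ u : U, ∃ i ∈ R, u ∈ S i) ∧ R.card = k} with hA
  set B := {k : ℕ | ∃ D : Finset (U ⊕ (Fin m ⊕ W)),
          (∀ v, v ∈ D ∨ ∃ d ∈ D,
            (SimpleGraph.fromRel (fun x y =>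
              (∃ u i, x = Sum.inl u ∧ y = Sum.inr (Sum.inl i) ∧ u ∈ S i) ∨
              (∃ i, x = Sum.inr (Sum.inl i) ∧ y = Sum.inr (Sum.inr (hW i))))).Adj v d) ∧
          D.card = k} with hB
  have hAne : A.Nonempty := ⟨(Finset.univ : Finset (Fin m)).card, Finset.univ,
    fun u => ⟨(hfeas u).choose, Finset.mem_univ _, (hfeas u).choose_spec⟩, rfl⟩
  have hBne : B.Nonempty := ⟨(Finset.univ : Finset (U ⊕ (Fin m ⊕ W))).card, Finset.univ,
    fun v => Or.inl (Finset.mem_univ _), rfl⟩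
  constructor
  · -- lower bound
    obtain ⟨D, hD, hDcard⟩ := Nat.sInf_mem hBne
    -- map vertices to optional set indices
    classical
    let f : (U ⊕ (Fin m ⊕ W)) → Option (Fin m) := fun v =>
      match v with
      | Sum.inl u => some (hfeas u).choose
      | Sum.inr (Sum.inl i) => some i
      | Sum.inr (Sum.inr _) => none
    refine le_trans (Nat.sInf_le (?_ : (D.image f).eraseNone.card ∈ A)) ?_
    · refine ⟨(D.image f).eraseNone, ?_, rfl⟩
      intro u
      rcases hD (Sum.inl u) with h | ⟨d, hdD, hadj⟩
      · refine ⟨(hfeas u).choose, ?_, (hfeas u).choose_spec⟩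
        rw [Finset.mem_eraseNone]
        exact Finset.mem_image_of_mem f h
      · rw [SimpleGraph.fromRel_adj] at hadj
        obtain ⟨hne, hrel⟩ := hadj
        have : ∃ i, d = Sum.inr (Sum.inl i) ∧ u ∈ S i := by
          rcases hrel with (⟨u', i, h1, h2, h3⟩ | ⟨i, h1, h2⟩) | (⟨u', i, h1, h2, h3⟩ | ⟨i, h1, h2⟩)
          · exact ⟨i, h2, by cases h1; exact h3⟩
          · exact absurd h1 (by simp)
          · exact absurd h2 (by simp)
          · exact absurd h2 (by simp)
        obtain ⟨i, rfl, hi⟩ := this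
        refine ⟨i, ?_, hi⟩
        rw [Finset.mem_eraseNone]
        exact Finset.mem_image_of_mem f hdD
    · rw [← hDcard]
      exact le_trans (Finset.card_le_card_of_injOn some (fun a ha => Finset.mem_eraseNone.mp ha) (fun a _ b _ h => Option.some_injective _ h)) Finset.card_image_le
  · -- upper bound
    obtain ⟨R, hR, hRcard⟩ := Nat.sInf_mem hAne
    classical
    set D : Finset (U ⊕ (Fin m ⊕ W)) :=
      R.image (fun i => Sum.inr (Sum.inl i)) ∪
      Finset.univ.image (fun w : W => Sum.inr (Sum.inr w)) with hDdef
    have hdom : ∀ v, v ∈ D ∨ ∃ d ∈ D,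
        (SimpleGraph.fromRel (fun x y =>
          (∃ u i, x = Sum.inl u ∧ y = Sum.inr (Sum.inl i) ∧ u ∈ S i) ∨
          (∃ i, x = Sum.inr (Sum.inl i) ∧ y = Sum.inr (Sum.inr (hW i))))).Adj v d := by
      rintro (u | i | w)
      · obtain ⟨i, hiR, hui⟩ := hR u
        refine Or.inr ⟨Sum.inr (Sum.inl i), ?_, ?_⟩
        · exact Finset.mem_union_left _ (Finset.mem_image_of_mem _ hiR)
        · rw [SimpleGraph.fromRel_adj]
          exact ⟨by simp, Or.inl (Or.inl ⟨u, i, rfl, rfl, hui⟩)⟩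
      · refine Or.inr ⟨Sum.inr (Sum.inr (hW i)), ?_, ?_⟩
        · exact Finset.mem_union_right _ (Finset.mem_image_of_mem _ (Finset.mem_univ _))
        · rw [SimpleGraph.fromRel_adj]
          exact ⟨by simp, Or.inl (Or.inr ⟨i, rfl, rfl⟩)⟩
      · exact Or.inl (Finset.mem_union_right _ (Finset.mem_image_of_mem _ (Finset.mem_univ _)))
    refine le_trans (Nat.sInf_le (⟨D, hdom, rfl⟩ : D.card ∈ B)) ?_
    calc D.card ≤ (R.image (fun i => Sum.inr (Sum.inl i) : Fin m → U ⊕ (Fin m ⊕ W))).card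
        + (Finset.univ.image (fun w : W => Sum.inr (Sum.inr w) : W → U ⊕ (Fin m ⊕ W))).card :=
          Finset.card_union_le _ _
      _ ≤ R.card + Fintype.card W := by
          gcongr <;> [exact Finset.card_image_le; exact le_trans Finset.card_image_le (by simp)]
      _ = sInf A + (m + Γ - 1) / Γ := by rw [hRcard, hWcard]
end
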